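/- Every string a in S (the union S_1 ∪ S_2 of the ten families S_{1a},...,S_{1e}, S_{2a},...,S_{2e}) satisfies -4 ≤ I(a) ≤ 0, where I(a) = Σ_i (a_i - 3). Moreover, a ∈ S with I(a) = 0 if and only if a ∈ S_{2a} ∪ S_{2b} ∪ S_{2c}. -/

import Mathlib

/-! `I` is additive and invariant under cyclic reordering and reversal, so it can be read off
family by family once `I(b) + I(c) = -2` is known for linear-dual strings `b`, `c`. For that,
one of two dual strings starts with `2`; deleting this `2` and lowering the head of the other
string by one gives a dual pair again (a computation with numerators and denominators), and the
recursion ends at the pair `([2], [2])`. The families then have `I = -4, -1, -2, -2, -1` on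
`S_1` and `I = 0, 0, 0, -1, -3` on `S_2`; for `S_{2c}` the blocks contribute
`x_{1+2j} - x_{2+2j}`, which cancel after the shift `j ↦ j + 1/2` of `ZMod (2k+1)`. -/

/-- Numerator and denominator of the Hirzebruch–Jung continued fraction
`[a_1,...,a_n] = a_1 - 1/(a_2 - 1/(⋯ - 1/a_n))`; the empty fraction is `1/0`. -/
def hj : List ℕ → ℤ × ℤ
  | [] => (1, 0)
  | a :: l => ((a : ℤ) * (hj l).1 - (hj l).2, (hj l).1)

def hjNum (l : List ℕ) : ℤ := (hj l).1

def hjDen (l : List ℕ) : ℤ := (hj l).2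

/-- Linear-dual strings: entries `≥ 2` and `[c] = p/(p-q)` where `[b] = p/q`. -/
def IsLinearDual (b c : List ℕ) : Prop :=
  (∀ x ∈ b, 2 ≤ x) ∧ (∀ x ∈ c, 2 ≤ x) ∧
    hjNum c = hjNum b ∧ hjDen b + hjDen c = hjNum b

/-- Equivalence of strings up to cyclic reordering and reversal. -/
def cycEquiv (a b : List ℕ) : Prop :=
  ∃ m, a.rotate m = b ∨ (a.rotate m).reverse = b

/-- `I(a) = Σ_i (a_i - 3)`. -/
def Ival (a : List ℕ) : ℤ := (a.map fun x => (x : ℤ) - 3).sum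

/-- Add `1` to the first entry. -/
def bumpHead (l : List ℕ) : List ℕ := l.modifyHead (· + 1)

/-- Add `1` to the last entry. -/
def bumpLast (l : List ℕ) : List ℕ := (l.reverse.modifyHead (· + 1)).reverse

/-- `S_{1a} = {(b_1,...,b_k, 2, c_l,...,c_1, 2) | k + l ≥ 3}`. -/
def InS1a (a : List ℕ) : Prop :=
  ∃ b c, IsLinearDual b c ∧ 3 ≤ b.length + c.length ∧
    cycEquiv a (b ++ [2] ++ c.reverse ++ [2])

/-- `S_{1b} = {(b_1,...,b_k, 2, c_l,...,c_1, 5) | k + l ≥ 2}`. -/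
def InS1b (a : List ℕ) : Prop :=
  ∃ b c, IsLinearDual b c ∧ 2 ≤ b.length + c.length ∧
    cycEquiv a (b ++ [2] ++ c.reverse ++ [5])

/-- `S_{1c} = {(b_1,...,b_k, 3, c_l,...,c_1, 3) | k + l ≥ 2}`. -/
def InS1c (a : List ℕ) : Prop :=
  ∃ b c, IsLinearDual b c ∧ 2 ≤ b.length + c.length ∧
    cycEquiv a (b ++ [3] ++ c.reverse ++ [3])

/-- `S_{1d} = {(2, b_1+1, b_2,...,b_{k-1}, b_k+1, 2, 2, c_l+1, c_{l-1},...,c_2, c_1+1, 2)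
| k + l ≥ 3}`. -/
def InS1d (a : List ℕ) : Prop :=
  ∃ b c, IsLinearDual b c ∧ 3 ≤ b.length + c.length ∧
    cycEquiv a ([2] ++ bumpHead (bumpLast b) ++ [2, 2] ++
      bumpHead (bumpLast c.reverse) ++ [2])

/-- `S_{1e} = {(2, 3+x, 2, 3, 3, 2^{[x-1]}, 3, 3) | x ≥ 0}`, where
`(3, 2^{[-1]}, 3) := (4)`. -/
def InS1e (a : List ℕ) : Prop :=
  ∃ x : ℕ, cycEquiv a
    (if x = 0 then [2, 3, 2, 3, 4, 3]
     else [2, 3 + x, 2, 3, 3] ++ List.replicate (x - 1) 2 ++ [3, 3])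

/-- `S_{2a} = {(b_1+3, b_2,...,b_k, 2, c_l,...,c_1)}`. -/
def InS2a (a : List ℕ) : Prop :=
  ∃ b c, IsLinearDual b c ∧ cycEquiv a (b.modifyHead (· + 3) ++ [2] ++ c.reverse)

/-- `S_{2b} = {(3+x, b_1,...,b_{k-1}, b_k+1, 2^{[x]}, c_l+1, c_{l-1},...,c_1)
| x ≥ 0, k + l ≥ 2}`. -/
def InS2b (a : List ℕ) : Prop :=
  ∃ b c, ∃ x : ℕ, IsLinearDual b c ∧ 2 ≤ b.length + c.length ∧
    cycEquiv a ((3 + x) :: (bumpLast b ++ List.replicate x 2 ++ bumpHead c.reverse))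

/-- The string `(3+x_1, 2^{[x_2]}, 3+x_3, ..., 3+x_{2k+1}, 2^{[x_1]}, 3+x_2, 2^{[x_3]},
..., 3+x_{2k}, 2^{[x_{2k+1}]})`, with parameters indexed cyclically by `ZMod (2k+1)`:
the `j`-th block is `(3 + x_{1+2j}, 2^{[x_{2+2j}]})`. -/
def s2cStr (k : ℕ) (x : ZMod (2 * k + 1) → ℕ) : List ℕ :=
  (List.range (2 * k + 1)).flatMap fun j =>
    (3 + x (1 + 2 * (j : ZMod (2 * k + 1)))) ::
      List.replicate (x (2 + 2 * (j : ZMod (2 * k + 1)))) 2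

/-- Membership in `S_{2c}`, up to cyclic reordering and reversal. -/
def InS2c (a : List ℕ) : Prop := ∃ k x, cycEquiv a (s2cStr k x)

/-- `S_{2d} = {(2, 2+x, 2, 3, 2^{[x-1]}, 3, 4) | x ≥ 0}`, where
`(3, 2^{[-1]}, 3) := (4)`. -/
def InS2d (a : List ℕ) : Prop :=
  ∃ x : ℕ, cycEquiv a
    (if x = 0 then [2, 2, 2, 4, 4]
     else [2, 2 + x, 2, 3] ++ List.replicate (x - 1) 2 ++ [3, 4])

/-- `S_{2e} = {(2, b_1+1, b_2,...,b_k, 2, c_l,...,c_2, c_1+1, 2) | k + l ≥ 3}`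
together with `(2,2,2,3)`. -/
def InS2e (a : List ℕ) : Prop :=
  (∃ b c, IsLinearDual b c ∧ 3 ≤ b.length + c.length ∧
    cycEquiv a ([2] ++ bumpHead b ++ [2] ++ bumpLast c.reverse ++ [2])) ∨
  cycEquiv a [2, 2, 2, 3]

def InS1 (a : List ℕ) : Prop := InS1a a ∨ InS1b a ∨ InS1c a ∨ InS1d a ∨ InS1e a

def InS2 (a : List ℕ) : Prop := InS2a a ∨ InS2b a ∨ InS2c a ∨ InS2d a ∨ InS2e a

def InS (a : List ℕ) : Prop := InS1 a ∨ InS2 a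

@[simp] lemma Ival_nil : Ival [] = 0 := rfl

@[simp] lemma Ival_cons (x : ℕ) (l : List ℕ) : Ival (x :: l) = (x : ℤ) - 3 + Ival l := by
  simp [Ival]

@[simp] lemma Ival_append (l m : List ℕ) : Ival (l ++ m) = Ival l + Ival m := by
  simp [Ival]

@[simp] lemma Ival_replicate (n x : ℕ) : Ival (List.replicate n x) = n * ((x : ℤ) - 3) := by
  induction n with
  | zero => simp
  | succ n ih =>
    simp only [List.replicate_succ, Ival_cons, ih, Nat.cast_add, Nat.cast_one]
    ring

lemma Ival_flatMap {α : Type*} (l : List α) (f : α → List ℕ) :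
    Ival (l.flatMap f) = (l.map fun j => Ival (f j)).sum := by
  induction l with
  | nil => rfl
  | cons a t ih => simp [ih]

lemma Ival_perm {l m : List ℕ} (h : l.Perm m) : Ival l = Ival m := by
  unfold Ival; exact ((h.flatMap_right _).map _).sum_eq

@[simp] lemma Ival_reverse (l : List ℕ) : Ival l.reverse = Ival l :=
  Ival_perm l.reverse_perm

lemma Ival_eq_of_cycEquiv {a b : List ℕ} (h : cycEquiv a b) : Ival a = Ival b := by
  obtain ⟨m, rfl | rfl⟩ := h
  · exact Ival_perm (a.rotate_perm m).symm
  · rw [Ival_reverse]; exact Ival_perm (a.rotate_perm m).symm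

lemma Ival_modifyHead_add {l : List ℕ} (h : l ≠ []) (n : ℕ) :
    Ival (l.modifyHead (· + n)) = Ival l + n := by
  obtain ⟨x, t, rfl⟩ := List.exists_cons_of_ne_nil h
  simp only [List.modifyHead_cons, Ival_cons, Nat.cast_add]
  ring

@[simp] lemma Ival_bumpHead {l : List ℕ} (h : l ≠ []) : Ival (bumpHead l) = Ival l + 1 :=
  mod_cast Ival_modifyHead_add h 1

@[simp] lemma Ival_bumpLast {l : List ℕ} (h : l ≠ []) : Ival (bumpLast l) = Ival l + 1 := by
  rw [bumpLast, Ival_reverse, ← bumpHead, Ival_bumpHead (List.reverse_ne_nil_iff.mpr h),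
    Ival_reverse]

@[simp] lemma bumpLast_eq_nil_iff {l : List ℕ} : bumpLast l = [] ↔ l = [] := by
  simp [bumpLast]

lemma sum_map_range_natCast_zmod {M : Type*} [AddCommMonoid M] (n : ℕ) [NeZero n]
    (f : ZMod n → M) :
    (((List.range n).map (Nat.cast : ℕ → ZMod n)).map f).sum = ∑ t, f t := by
  classical
  have hnodup : ((List.range n).map (Nat.cast : ℕ → ZMod n)).Nodup := by
    refine List.Nodup.map_on (fun i hi j hj hij => ?_) List.nodup_range
    rw [List.mem_range] at hi hj
    rw [← ZMod.val_cast_of_lt hi, ← ZMod.val_cast_of_lt hj, hij]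
  rw [← List.sum_toFinset f hnodup]
  congr
  ext t
  simpa using ⟨t.val, ZMod.val_lt t, ZMod.natCast_zmod_val t⟩

lemma Ival_s2cStr (k : ℕ) (x : ZMod (2 * k + 1) → ℕ) : Ival (s2cStr k x) = 0 := by
  set c : ZMod (2 * k + 1) := k + 1
  -- `c = 1/2` in `ZMod (2k+1)`
  have hshift (j : ZMod (2 * k + 1)) : 2 + 2 * j = 1 + 2 * (j + c) := by
    have h0 : ((2 * k + 1 : ℕ) : ZMod (2 * k + 1)) = 0 := ZMod.natCast_self _
    push_cast at h0
    linear_combination -h0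
  have hblock (j : ZMod (2 * k + 1)) :
      Ival ((3 + x (1 + 2 * j)) :: List.replicate (x (2 + 2 * j)) 2)
        = (x (1 + 2 * j) : ℤ) - x (1 + 2 * (j + c)) := by
    simp [hshift, sub_eq_add_neg]
  -- `s2cStr` runs over `List.range` coerced to `ZMod`, which elaborates as a monadic bind
  rw [s2cStr, bind_pure_comp, List.map_eq_map, Ival_flatMap, funext hblock,
    sum_map_range_natCast_zmod, Finset.sum_sub_distrib, sub_eq_zero]
  exact (Equiv.sum_comp (Equiv.addRight c) fun t => (x (1 + 2 * t) : ℤ)).symm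

@[simp] lemma hjNum_nil : hjNum [] = 1 := rfl

@[simp] lemma hjDen_nil : hjDen [] = 0 := rfl

@[simp] lemma hjNum_cons (x : ℕ) (l : List ℕ) : hjNum (x :: l) = x * hjNum l - hjDen l := rfl

@[simp] lemma hjDen_cons (x : ℕ) (l : List ℕ) : hjDen (x :: l) = hjNum l := rfl

lemma hjDen_nonneg_and_lt_hjNum {l : List ℕ} (hl : ∀ x ∈ l, 2 ≤ x) :
    0 ≤ hjDen l ∧ hjDen l < hjNum l := by
  induction l with
  | nil => simp
  | cons x t ih =>
    have hx : (2 : ℤ) ≤ x := mod_cast hl x List.mem_cons_self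
    obtain ⟨h0, h1⟩ := ih fun y hy => hl y (List.mem_cons_of_mem x hy)
    simp only [hjNum_cons, hjDen_cons]
    constructor <;> nlinarith

lemma one_le_hjDen {l : List ℕ} (hne : l ≠ []) (hl : ∀ x ∈ l, 2 ≤ x) : 1 ≤ hjDen l := by
  obtain ⟨x, t, rfl⟩ := List.exists_cons_of_ne_nil hne
  have := hjDen_nonneg_and_lt_hjNum fun y hy => hl y (List.mem_cons_of_mem x hy)
  simp only [hjDen_cons]
  omega

lemma one_lt_hjNum {l : List ℕ} (hne : l ≠ []) (hl : ∀ x ∈ l, 2 ≤ x) : 1 < hjNum l :=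
  (one_le_hjDen hne hl).trans_lt (hjDen_nonneg_and_lt_hjNum hl).2

lemma two_mul_hjDen_lt_hjNum {x : ℕ} {t : List ℕ} (hx : 3 ≤ x) (hl : ∀ y ∈ x :: t, 2 ≤ y) :
    2 * hjDen (x :: t) < hjNum (x :: t) := by
  have hx' : (3 : ℤ) ≤ x := mod_cast hx
  obtain ⟨h0, h1⟩ := hjDen_nonneg_and_lt_hjNum fun y hy => hl y (List.mem_cons_of_mem x hy)
  simp only [hjNum_cons, hjDen_cons]
  nlinarith

namespace IsLinearDual

variable {b c : List ℕ}

lemma symm (h : IsLinearDual b c) : IsLinearDual c b := by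
  obtain ⟨hb, hc, hnum, hden⟩ := h
  exact ⟨hc, hb, hnum.symm, by linarith⟩

lemma left_ne_nil (h : IsLinearDual b c) : b ≠ [] := by
  rintro rfl
  obtain ⟨-, hc, hnum, hden⟩ := h
  have : c = [] := by
    by_contra hne
    have := one_lt_hjNum hne hc
    simp_all
  simp [this] at hden

lemma right_ne_nil (h : IsLinearDual b c) : c ≠ [] :=
  h.symm.left_ne_nil

-- If both heads were `≥ 3`, adding `2 * hjDen < hjNum` for `b` and `c` would contradict `hden`.
lemma head_eq_two (h : IsLinearDual b c) : (∃ t, b = 2 :: t) ∨ (∃ t, c = 2 :: t) := by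
  obtain ⟨x, b', rfl⟩ := List.exists_cons_of_ne_nil h.left_ne_nil
  obtain ⟨y, c', rfl⟩ := List.exists_cons_of_ne_nil h.right_ne_nil
  obtain ⟨hb, hc, hnum, hden⟩ := h
  by_contra! hne
  have hx : 3 ≤ x := by
    have : x ≠ 2 := fun hx => hne.1 b' (by rw [hx])
    have := hb x List.mem_cons_self
    omega
  have hy : 3 ≤ y := by
    have : y ≠ 2 := fun hy => hne.2 c' (by rw [hy])
    have := hc y List.mem_cons_self
    omega
  have := two_mul_hjDen_lt_hjNum hx hb
  have := two_mul_hjDen_lt_hjNum hy hc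
  linarith

lemma eq_singleton_two (h : IsLinearDual [2] c) : c = [2] := by
  obtain ⟨y, c', rfl⟩ := List.exists_cons_of_ne_nil h.right_ne_nil
  obtain ⟨-, hc, hnum, hden⟩ := h
  have hc' : c' = [] := by
    by_contra hne
    have := one_lt_hjNum hne fun z hz => hc z (List.mem_cons_of_mem y hz)
    simp only [hjDen_cons, hjNum_cons, hjNum_nil, hjDen_nil] at hden
    omega
  subst hc'
  simp only [hjNum_cons, hjNum_nil, hjDen_nil] at hnum
  simp only [List.cons.injEq, and_true]
  omega

lemma tail {b' c' : List ℕ} {y : ℕ} (h : IsLinearDual (2 :: b') (y :: c')) (hb' : b' ≠ []) :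
    ∃ y', y = y' + 1 ∧ IsLinearDual b' (y' :: c') := by
  obtain ⟨hb, hc, hnum, hden⟩ := h
  have hb2 : ∀ z ∈ b', 2 ≤ z := fun z hz => hb z (List.mem_cons_of_mem 2 hz)
  have hc2 : ∀ z ∈ c', 2 ≤ z := fun z hz => hc z (List.mem_cons_of_mem y hz)
  have hy : 2 ≤ y := hc y List.mem_cons_self
  obtain ⟨y', rfl⟩ : ∃ y', y = y' + 1 := ⟨y - 1, by omega⟩
  have hDb := one_le_hjDen hb' hb2
  have hDc := (hjDen_nonneg_and_lt_hjNum hc2).1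
  simp only [hjNum_cons, hjDen_cons] at hnum hden
  push_cast at hnum hden
  have hy' : 2 ≤ y' := by
    obtain rfl | hy' : y' = 1 ∨ 2 ≤ y' := by omega
    -- `y' = 1` would force `hjDen c' = - hjDen b' < 0`
    · push_cast at hnum
      linarith
    · exact hy'
  refine ⟨y', rfl, hb2, ?_, ?_, ?_⟩
  · simpa [hy'] using hc2
  · simp only [hjNum_cons]
    linarith
  · simp only [hjDen_cons]
    linarith

theorem Ival_add_Ival (h : IsLinearDual b c) : Ival b + Ival c = -2 := by
  induction hn : b.length + c.length using Nat.strong_induction_on generalizing b c with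
  | _ n ih =>
  wlog hb : ∃ t, b = 2 :: t generalizing b c
  · obtain hb' | hc := h.head_eq_two
    · exact absurd hb' hb
    · rw [add_comm]
      exact this h.symm (by omega) hc
  obtain ⟨b', rfl⟩ := hb
  obtain rfl | hb' := eq_or_ne b' []
  · rw [h.eq_singleton_two]
    rfl
  obtain ⟨y, c', rfl⟩ := List.exists_cons_of_ne_nil h.right_ne_nil
  obtain ⟨y', rfl, h'⟩ := h.tail hb'
  have := ih _ (by simp only [List.length_cons] at hn ⊢; omega) h' rfl
  simp only [Ival_cons] at this ⊢
  push_cast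
  linarith

end IsLinearDual

section Families

variable {a : List ℕ}

theorem InS1a.Ival_eq (h : InS1a a) : Ival a = -4 := by
  obtain ⟨b, c, hd, -, hcyc⟩ := h
  have := hd.Ival_add_Ival
  simp [Ival_eq_of_cycEquiv hcyc]
  linarith

theorem InS1b.Ival_eq (h : InS1b a) : Ival a = -1 := by
  obtain ⟨b, c, hd, -, hcyc⟩ := h
  have := hd.Ival_add_Ival
  simp [Ival_eq_of_cycEquiv hcyc]
  linarith

theorem InS1c.Ival_eq (h : InS1c a) : Ival a = -2 := by
  obtain ⟨b, c, hd, -, hcyc⟩ := h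
  have := hd.Ival_add_Ival
  simp [Ival_eq_of_cycEquiv hcyc]
  linarith

theorem InS1d.Ival_eq (h : InS1d a) : Ival a = -2 := by
  obtain ⟨b, c, hd, -, hcyc⟩ := h
  have := hd.Ival_add_Ival
  simp [Ival_eq_of_cycEquiv hcyc, hd.left_ne_nil, hd.right_ne_nil]
  linarith

theorem InS1e.Ival_eq (h : InS1e a) : Ival a = -1 := by
  obtain ⟨_ | x, hcyc⟩ := h <;> simp [Ival_eq_of_cycEquiv hcyc]

theorem InS2a.Ival_eq (h : InS2a a) : Ival a = 0 := by
  obtain ⟨b, c, hd, hcyc⟩ := h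
  have := hd.Ival_add_Ival
  simp [Ival_eq_of_cycEquiv hcyc, Ival_modifyHead_add hd.left_ne_nil]
  linarith

theorem InS2b.Ival_eq (h : InS2b a) : Ival a = 0 := by
  obtain ⟨b, c, x, hd, -, hcyc⟩ := h
  have := hd.Ival_add_Ival
  simp [Ival_eq_of_cycEquiv hcyc, hd.left_ne_nil, hd.right_ne_nil]
  linarith

theorem InS2c.Ival_eq (h : InS2c a) : Ival a = 0 := by
  obtain ⟨k, x, hcyc⟩ := h
  rw [Ival_eq_of_cycEquiv hcyc, Ival_s2cStr]

theorem InS2d.Ival_eq (h : InS2d a) : Ival a = -1 := by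
  obtain ⟨_ | x, hcyc⟩ := h
  · simp [Ival_eq_of_cycEquiv hcyc]
  · simp [Ival_eq_of_cycEquiv hcyc]
    ring

theorem InS2e.Ival_eq (h : InS2e a) : Ival a = -3 := by
  obtain ⟨b, c, hd, -, hcyc⟩ | hcyc := h
  · have := hd.Ival_add_Ival
    simp [Ival_eq_of_cycEquiv hcyc, hd.left_ne_nil, hd.right_ne_nil]
    linarith
  · simp [Ival_eq_of_cycEquiv hcyc]

theorem Ival_eq_zero_of_InS2abc (h : InS2a a ∨ InS2b a ∨ InS2c a) : Ival a = 0 := by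
  obtain h | h | h := h <;> exact h.Ival_eq

theorem InS1.Ival_mem (h : InS1 a) : -4 ≤ Ival a ∧ Ival a < 0 := by
  obtain h | h | h | h | h := h <;> rw [h.Ival_eq] <;> norm_num

theorem InS.InS2abc_or_Ival_neg (h : InS a) :
    (InS2a a ∨ InS2b a ∨ InS2c a) ∨ (-4 ≤ Ival a ∧ Ival a < 0) := by
  obtain h | h | h | h | h | h := h
  · exact .inr h.Ival_mem
  · exact .inl (.inl h)
  · exact .inl (.inr (.inl h))
  · exact .inl (.inr (.inr h))
  · exact .inr (by rw [h.Ival_eq]; norm_num)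
  · exact .inr (by rw [h.Ival_eq]; norm_num)

end Families

/-- Every string `a ∈ S = S_1 ∪ S_2` satisfies `-4 ≤ I(a) ≤ 0`; moreover, for
`a ∈ S`, `I(a) = 0` if and only if `a ∈ S_{2a} ∪ S_{2b} ∪ S_{2c}`. -/
theorem I_bounds_on_S :
    (∀ a : List ℕ, InS a → -4 ≤ Ival a ∧ Ival a ≤ 0) ∧
    (∀ a : List ℕ, InS a → (Ival a = 0 ↔ InS2a a ∨ InS2b a ∨ InS2c a)) := by
  refine ⟨fun a ha => ?_, fun a ha => ⟨fun h0 => ?_, Ival_eq_zero_of_InS2abc⟩⟩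
  · obtain h | h := ha.InS2abc_or_Ival_neg
    · rw [Ival_eq_zero_of_InS2abc h]
      norm_num
    · exact ⟨h.1, h.2.le⟩
  · exact ha.InS2abc_or_Ival_neg.resolve_right (by omega)
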